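/- arXiv:1202.3981 — 2 statements merged into one kernel-verified Lean document; each statement's English description precedes it below -/
import Mathlib

section
/- For every nonnegative integer n, ∑_{k=0}^{n} k⁵·H_k·H_{n-k} = (n²(n+1)²(2n²+2n−1)/12)·[H_{n+1}² − H_{n+1}^{(2)}] − (1/360)·n²(n+1)(157n³+218n²+17n−32)·H_{n+1} + (1/21600)·n²(n+1)(6839n³+14566n²+4129n−3934). -/
open Finset

/-- The harmonic number `H n = ∑_{k=1}^n 1/k`. -/
def H (n : ℕ) : ℚ := ∑ k ∈ Finset.range n, (1 : ℚ) / ((k : ℚ) + 1)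

/-- The generalized harmonic number `H n ^ (m) = ∑_{k=1}^n 1/k^m`. -/
def Hgen (m n : ℕ) : ℚ := ∑ k ∈ Finset.range n, (1 : ℚ) / ((k : ℚ) + 1) ^ m

/-!
Write `T n` for the left-hand side. Splitting off the last term of `H (n + 1 - k)` gives
`T (n + 1) = T n + ∑_{k ≤ n} k⁵ H_k / (n + 1 - k)`. Dividing `k⁵` by `n + 1 - k` turns the increment
into `(n + 1)⁵ ∑_{k ≤ n} H_k / (n + 1 - k)` minus a combination of the moments `∑_{k ≤ n} kⁱ H_k`,
`i < 5`. The first sum is `H_{n+1}² - H_{n+1}^{(2)}`, and each moment has the form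
`a(n) H_{n+1} + b(n)` with polynomials `a`, `b` (Abel summation gives `a(n) = ∑_{k ≤ n} kⁱ`),
so the identity follows by induction on `n`.
-/

lemma H_zero : H 0 = 0 := by simp [H]

lemma H_succ (n : ℕ) : H (n + 1) = H n + 1 / ((n : ℚ) + 1) := by
  simp [H, sum_range_succ]

lemma Hgen_succ (m n : ℕ) : Hgen m (n + 1) = Hgen m n + 1 / ((n : ℚ) + 1) ^ m := by
  simp [Hgen, sum_range_succ]

lemma sub_pos_of_mem_range_succ {n k : ℕ} (hk : k ∈ range (n + 1)) : 0 < (n : ℚ) + 1 - k := by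
  have : (k : ℚ) < n + 1 := by exact_mod_cast mem_range.mp hk
  linarith

lemma sum_mul_H_sub_succ (g : ℕ → ℚ) (n : ℕ) :
    ∑ k ∈ range (n + 1 + 1), g k * H (n + 1 - k)
      = ∑ k ∈ range (n + 1), g k * H (n - k) + ∑ k ∈ range (n + 1), g k / ((n : ℚ) + 1 - k) := by
  rw [sum_range_succ, Nat.sub_self, H_zero, mul_zero, add_zero, ← sum_add_distrib]
  refine sum_congr rfl fun k hk => ?_
  have hkn : k ≤ n := Nat.lt_succ_iff.mp (mem_range.mp hk)
  rw [Nat.sub_add_comm hkn, H_succ, Nat.cast_sub hkn]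
  ring

lemma sum_one_div_sub (n : ℕ) : ∑ k ∈ range (n + 1), 1 / ((n : ℚ) + 1 - k) = H (n + 1) := by
  rw [H, ← sum_range_reflect _ (n + 1)]
  refine sum_congr rfl fun k hk => ?_
  rw [Nat.add_sub_cancel, Nat.cast_sub (Nat.lt_succ_iff.mp (mem_range.mp hk))]
  ring

lemma sum_one_div_div_sub (n : ℕ) :
    ∑ k ∈ range (n + 1), 1 / ((k : ℚ) + 1) / ((n : ℚ) + 1 - k) = 2 * H (n + 1) / ((n : ℚ) + 2) := by
  have partial_fractions : ∀ k ∈ range (n + 1), 1 / ((k : ℚ) + 1) / ((n : ℚ) + 1 - k)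
      = (1 / ((k : ℚ) + 1) + 1 / ((n : ℚ) + 1 - k)) / ((n : ℚ) + 2) := by
    intro k hk
    have := sub_pos_of_mem_range_succ hk
    field_simp
    ring
  rw [sum_congr rfl partial_fractions, ← sum_div, sum_add_distrib, sum_one_div_sub]
  simp only [H, one_div]
  ring

lemma sum_one_div_mul_H_sub (n : ℕ) :
    ∑ k ∈ range (n + 1), 1 / ((k : ℚ) + 1) * H (n - k) = H (n + 1) ^ 2 - Hgen 2 (n + 1) := by
  induction n with
  | zero => simp [H, Hgen]
  | succ n ih =>
    rw [sum_mul_H_sub_succ (fun k => 1 / ((k : ℚ) + 1)) n, ih, sum_one_div_div_sub,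
      H_succ (n + 1), Hgen_succ 2 (n + 1)]
    push_cast
    field_simp
    ring

lemma sum_H_div_sub (n : ℕ) :
    ∑ k ∈ range (n + 1), H k / ((n : ℚ) + 1 - k) = H (n + 1) ^ 2 - Hgen 2 (n + 1) := by
  rw [← sum_one_div_mul_H_sub, ← sum_range_reflect (fun k => 1 / ((k : ℚ) + 1) * H (n - k))]
  refine sum_congr rfl fun k hk => ?_
  have hkn := Nat.lt_succ_iff.mp (mem_range.mp hk)
  rw [Nat.add_sub_cancel, Nat.sub_sub_self hkn, Nat.cast_sub hkn]
  ring

def harmonicMoment (i n : ℕ) : ℚ := ∑ k ∈ range (n + 1), (k : ℚ) ^ i * H k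

lemma sum_pow_mul_H_div_sub (j n : ℕ) :
    ∑ k ∈ range (n + 1), (k : ℚ) ^ j * H k / ((n : ℚ) + 1 - k)
      = ((n : ℚ) + 1) ^ j * (H (n + 1) ^ 2 - Hgen 2 (n + 1))
        - ∑ i ∈ range j, ((n : ℚ) + 1) ^ (j - 1 - i) * harmonicMoment i n := by
  have long_division : ∀ k ∈ range (n + 1), (k : ℚ) ^ j * H k / ((n : ℚ) + 1 - k)
      = ((n : ℚ) + 1) ^ j * (H k / ((n : ℚ) + 1 - k))
        - ∑ i ∈ range j, ((n : ℚ) + 1) ^ (j - 1 - i) * ((k : ℚ) ^ i * H k) := by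
    intro k hk
    have := sub_pos_of_mem_range_succ hk
    have regroup : ∑ i ∈ range j, ((n : ℚ) + 1) ^ (j - 1 - i) * ((k : ℚ) ^ i * H k)
        = (∑ i ∈ range j, (k : ℚ) ^ i * ((n : ℚ) + 1) ^ (j - 1 - i)) * H k := by
      rw [sum_mul]
      exact sum_congr rfl fun i _ => by ring
    rw [regroup]
    field_simp
    linear_combination (-H k) * geom_sum₂_mul (k : ℚ) ((n : ℚ) + 1) j
  rw [sum_congr rfl long_division, sum_sub_distrib, ← mul_sum, sum_H_div_sub, sum_comm]
  simp only [harmonicMoment, mul_sum]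

lemma harmonicMoment_succ (i n : ℕ) :
    harmonicMoment i (n + 1) = harmonicMoment i n + ((n : ℚ) + 1) ^ i * H (n + 1) := by
  rw [harmonicMoment, sum_range_succ, ← harmonicMoment]
  push_cast
  ring

lemma harmonicMoment_zero_eq (n : ℕ) :
    harmonicMoment 0 n = (n + 1 : ℚ) * H (n + 1) - (n + 1 : ℚ) := by
  induction n with
  | zero => simp [harmonicMoment, H]
  | succ n ih =>
    rw [harmonicMoment_succ, ih, H_succ (n + 1)]
    push_cast
    field_simp
    ring

lemma harmonicMoment_one_eq (n : ℕ) :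
    harmonicMoment 1 n = (n * (n + 1) / 2 : ℚ) * H (n + 1) - (n * (n + 1) / 4 : ℚ) := by
  induction n with
  | zero => simp [harmonicMoment, H]
  | succ n ih =>
    rw [harmonicMoment_succ, ih, H_succ (n + 1)]
    push_cast
    field_simp
    ring

lemma harmonicMoment_two_eq (n : ℕ) :
    harmonicMoment 2 n = (n * (n + 1) * (2 * n + 1) / 6 : ℚ) * H (n + 1)
      - (n * (n + 1) * (4 * n + 5) / 36 : ℚ) := by
  induction n with
  | zero => simp [harmonicMoment, H]
  | succ n ih =>
    rw [harmonicMoment_succ, ih, H_succ (n + 1)]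
    push_cast
    field_simp
    ring

lemma harmonicMoment_three_eq (n : ℕ) :
    harmonicMoment 3 n = (n ^ 2 * (n + 1) ^ 2 / 4 : ℚ) * H (n + 1)
      - (n * (n + 1) * (n + 2) * (3 * n + 1) / 48 : ℚ) := by
  induction n with
  | zero => simp [harmonicMoment, H]
  | succ n ih =>
    rw [harmonicMoment_succ, ih, H_succ (n + 1)]
    push_cast
    field_simp
    ring

lemma harmonicMoment_four_eq (n : ℕ) :
    harmonicMoment 4 n = (n * (n + 1) * (2 * n + 1) * (3 * n ^ 2 + 3 * n - 1) / 30 : ℚ) * H (n + 1)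
      - (n * (n + 1) * (72 * n ^ 3 + 243 * n ^ 2 + 167 * n - 32) / 1800 : ℚ) := by
  induction n with
  | zero => simp [harmonicMoment, H]
  | succ n ih =>
    rw [harmonicMoment_succ, ih, H_succ (n + 1)]
    push_cast
    field_simp
    ring

theorem stmt8 (n : ℕ) :
    ∑ k ∈ Finset.range (n + 1), (k : ℚ) ^ 5 * H k * H (n - k) =
      ((n : ℚ) ^ 2 * ((n : ℚ) + 1) ^ 2 * (2 * (n : ℚ) ^ 2 + 2 * (n : ℚ) - 1) / 12) *
          ((H (n + 1)) ^ 2 - Hgen 2 (n + 1))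
        - (1 / 360) * (n : ℚ) ^ 2 * ((n : ℚ) + 1) * (157 * (n : ℚ) ^ 3 + 218 * (n : ℚ) ^ 2 + 17 * (n : ℚ) - 32) * H (n + 1)
        + (1 / 21600) * (n : ℚ) ^ 2 * ((n : ℚ) + 1) *
            (6839 * (n : ℚ) ^ 3 + 14566 * (n : ℚ) ^ 2 + 4129 * (n : ℚ) - 3934) := by
  induction n with
  | zero => simp [H, Hgen]
  | succ n ih =>
    rw [sum_mul_H_sub_succ (fun k => (k : ℚ) ^ 5 * H k) n, ih, sum_pow_mul_H_div_sub]
    simp only [sum_range_succ, sum_range_zero, harmonicMoment_zero_eq, harmonicMoment_one_eq,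
      harmonicMoment_two_eq, harmonicMoment_three_eq, harmonicMoment_four_eq]
    rw [H_succ (n + 1), Hgen_succ 2 (n + 1)]
    push_cast
    field_simp
    ring
end

section
/- For every nonnegative integer n, ∑_{k=0}^{n} k⁴·H_{n-k}² = (n(n+1)(2n+1)(3n²+3n−1)/30)·H_{n+1}² − (1/900)(2n+1)(411n⁴+1002n³+679n²+28n−30)·H_{n+1} + (1/54000)(n+1)(72114n⁴+103491n³+46129n²+1466n−1800). -/
/-!
Reflecting `k ↦ n - k` and expanding `(n - j)^4` binomially reduces the sum to the moments
`∑_{j ≤ n} j^m H_j^2` for `m ≤ 4`. Each moment has the shape `a(n) H_{n+1}^2 + b(n) H_{n+1} + c(n)`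
with polynomials `a, b, c`, and such a closed form is verified by induction: since
`H_{n+2} = H_{n+1} + 1/(n+2)`, the induction step is a rational-function identity in `n` and `H_{n+1}`.
-/

open Finset

/-- `h` stands for `H (n+1)`. The conclusion is stated for all `n` so that, applied to a goal
`∀ n, _`, the closed form `a, b, c` is found by higher-order unification. -/
lemma sum_range_mul_H_sq_eq {f a b c : ℕ → ℚ} (base : a 0 + b 0 + c 0 = 0)
    (step : ∀ (n : ℕ) (h : ℚ),
      a n * h ^ 2 + b n * h + c n + f (n + 1) * h ^ 2 =
        a (n + 1) * (h + 1 / ((n : ℚ) + 2)) ^ 2 + b (n + 1) * (h + 1 / ((n : ℚ) + 2)) + c (n + 1)) :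
    ∀ n : ℕ, ∑ j ∈ range (n + 1), f j * H j ^ 2 = a n * H (n + 1) ^ 2 + b n * H (n + 1) + c n := by
  intro n
  induction n with
  | zero => simpa [H] using base.symm
  | succ n ih =>
    have hH : H (n + 1 + 1) = H (n + 1) + 1 / ((n : ℚ) + 2) := by
      rw [H_succ]; push_cast; ring_nf
    rw [sum_range_succ, ih, hH, step]

lemma sum_range_H_sq (n : ℕ) : ∑ j ∈ range (n + 1), H j ^ 2 =
    ((n : ℚ) + 1) * H (n + 1) ^ 2 + (-2 * (n : ℚ) - 3) * H (n + 1) + (2 * (n : ℚ) + 2) := by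
  rw [show ∑ j ∈ range (n + 1), H j ^ 2 = ∑ j ∈ range (n + 1), (fun _ ↦ (1 : ℚ)) j * H j ^ 2 by simp]
  revert n
  refine sum_range_mul_H_sq_eq ?_ fun n h ↦ ?_
  · norm_num
  · push_cast; field_simp; ring

lemma sum_range_mul_H_sq (n : ℕ) : ∑ j ∈ range (n + 1), (j : ℚ) * H j ^ 2 =
    ((n : ℚ) / 2 + (n : ℚ) ^ 2 / 2) * H (n + 1) ^ 2
      + (1 / 2 - (n : ℚ) / 2 - (n : ℚ) ^ 2 / 2) * H (n + 1)
      + (-1 / 2 - (n : ℚ) / 4 + (n : ℚ) ^ 2 / 4) := by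
  revert n
  refine sum_range_mul_H_sq_eq ?_ fun n h ↦ ?_
  · norm_num
  · push_cast; field_simp; ring

lemma sum_range_sq_mul_H_sq (n : ℕ) : ∑ j ∈ range (n + 1), (j : ℚ) ^ 2 * H j ^ 2 =
    ((n : ℚ) / 6 + (n : ℚ) ^ 2 / 2 + (n : ℚ) ^ 3 / 3) * H (n + 1) ^ 2
      + (-1 / 6 - 5 * (n : ℚ) / 18 - (n : ℚ) ^ 2 / 2 - 2 * (n : ℚ) ^ 3 / 9) * H (n + 1)
      + (1 / 6 + 19 * (n : ℚ) / 108 + (n : ℚ) ^ 2 / 12 + 2 * (n : ℚ) ^ 3 / 27) := by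
  revert n
  refine sum_range_mul_H_sq_eq ?_ fun n h ↦ ?_
  · norm_num
  · push_cast; field_simp; ring

lemma sum_range_pow_three_mul_H_sq (n : ℕ) : ∑ j ∈ range (n + 1), (j : ℚ) ^ 3 * H j ^ 2 =
    ((n : ℚ) ^ 2 / 4 + (n : ℚ) ^ 3 / 2 + (n : ℚ) ^ 4 / 4) * H (n + 1) ^ 2
      + (-(n : ℚ) / 12 - 3 * (n : ℚ) ^ 2 / 8 - 5 * (n : ℚ) ^ 3 / 12 - (n : ℚ) ^ 4 / 8) * H (n + 1)
      + (7 * (n : ℚ) / 144 + 3 * (n : ℚ) ^ 2 / 32 + 11 * (n : ℚ) ^ 3 / 144 + (n : ℚ) ^ 4 / 32) := by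
  revert n
  refine sum_range_mul_H_sq_eq ?_ fun n h ↦ ?_
  · norm_num
  · push_cast; field_simp; ring

lemma sum_range_pow_four_mul_H_sq (n : ℕ) : ∑ j ∈ range (n + 1), (j : ℚ) ^ 4 * H j ^ 2 =
    (-(n : ℚ) / 30 + (n : ℚ) ^ 3 / 3 + (n : ℚ) ^ 4 / 2 + (n : ℚ) ^ 5 / 5) * H (n + 1) ^ 2
      + (1 / 30 + 8 * (n : ℚ) / 225 - 3 * (n : ℚ) ^ 2 / 20 - 41 * (n : ℚ) ^ 3 / 90
          - 7 * (n : ℚ) ^ 4 / 20 - 2 * (n : ℚ) ^ 5 / 25) * H (n + 1)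
      + (-1 / 30 - 167 * (n : ℚ) / 27000 + 91 * (n : ℚ) ^ 2 / 1200 + 487 * (n : ℚ) ^ 3 / 5400
          + 23 * (n : ℚ) ^ 4 / 400 + 2 * (n : ℚ) ^ 5 / 125) := by
  revert n
  refine sum_range_mul_H_sq_eq ?_ fun n h ↦ ?_
  · norm_num
  · push_cast; field_simp; ring

theorem stmt17 (n : ℕ) :
    ∑ k ∈ Finset.range (n + 1), (k : ℚ) ^ 4 * (H (n - k)) ^ 2 =
      ((n : ℚ) * ((n : ℚ) + 1) * (2 * (n : ℚ) + 1) * (3 * (n : ℚ) ^ 2 + 3 * (n : ℚ) - 1) / 30) * (H (n + 1)) ^ 2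
        - (1 / 900) * (2 * (n : ℚ) + 1) *
            (411 * (n : ℚ) ^ 4 + 1002 * (n : ℚ) ^ 3 + 679 * (n : ℚ) ^ 2 + 28 * (n : ℚ) - 30) * H (n + 1)
        + (1 / 54000) * ((n : ℚ) + 1) *
            (72114 * (n : ℚ) ^ 4 + 103491 * (n : ℚ) ^ 3 + 46129 * (n : ℚ) ^ 2 + 1466 * (n : ℚ) - 1800) := by
  have reflect : ∑ k ∈ range (n + 1), (k : ℚ) ^ 4 * H (n - k) ^ 2
      = ∑ j ∈ range (n + 1), ((n : ℚ) - j) ^ 4 * H j ^ 2 := by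
    rw [← Nat.sum_antidiagonal_eq_sum_range_succ (fun k l ↦ (k : ℚ) ^ 4 * H l ^ 2),
      ← Nat.sum_antidiagonal_swap, Nat.sum_antidiagonal_eq_sum_range_succ_mk]
    exact sum_congr rfl fun j hj ↦ by simp [Nat.cast_sub (mem_range_succ_iff.mp hj)]
  have binomial (j : ℕ) : ((n : ℚ) - j) ^ 4 * H j ^ 2 =
      (n : ℚ) ^ 4 * H j ^ 2 - 4 * (n : ℚ) ^ 3 * ((j : ℚ) * H j ^ 2)
        + 6 * (n : ℚ) ^ 2 * ((j : ℚ) ^ 2 * H j ^ 2) - 4 * (n : ℚ) * ((j : ℚ) ^ 3 * H j ^ 2)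
        + (j : ℚ) ^ 4 * H j ^ 2 := by ring
  simp only [reflect, binomial, sum_add_distrib, sum_sub_distrib, ← mul_sum, sum_range_H_sq,
    sum_range_mul_H_sq, sum_range_sq_mul_H_sq, sum_range_pow_three_mul_H_sq,
    sum_range_pow_four_mul_H_sq]
  ring
end
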